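/- arXiv:0908.1257 — 3 statements merged into one kernel-verified Lean document; each statement's English description precedes it below -/
import Mathlib

section
/- Let 0 < α < 1, 1 < r < 1 + α, and ω(ξ) = ξ - ξ^r. There exists a constant C₂ > 0 (depending on r, α) such that for all sufficiently small ξ > 0: ∫₀^{ξ/2} [ω(ξ + 2η) + ω(ξ - 2η) - 2ω(ξ)] / η^{1+α} dη ≤ -C₂ ξ^{r-α}. -/
/-!
Since the linear part of `ω` cancels, the substitution `η = ξ t` shows that the integral equals
exactly `-ξ ^ (r - α) * I` with `I = ∫₀^{1/2} ((1 + 2t)^r + (1 - 2t)^r - 2) / t^(1+α) dt`.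
By strict convexity of `x ^ r` this integrand is positive, and by the chord inequality for
`x ^ r` on `[1, 2]` it is at most a multiple of `t ^ (-α)`, which is integrable as `α < 1`;
hence `0 < I < ∞`.
-/

open Real Set MeasureTheory

lemma two_lt_rpow_one_add_add_rpow_one_sub {r s : ℝ} (hr : 1 < r) (hs₀ : 0 < s) (hs₁ : s ≤ 1) :
    2 < (1 + s) ^ r + (1 - s) ^ r := by
  have h := (strictConvexOn_rpow hr).2 (mem_Ici.2 (by linarith : (0 : ℝ) ≤ 1 + s))
    (mem_Ici.2 (by linarith : (0 : ℝ) ≤ 1 - s)) (by linarith) (by norm_num : (0 : ℝ) < 1 / 2)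
    (by norm_num : (0 : ℝ) < 1 / 2) (by norm_num)
  simp only [smul_eq_mul] at h
  rw [show 1 / 2 * (1 + s) + 1 / 2 * (1 - s) = 1 by ring, one_rpow] at h
  linarith

lemma rpow_one_add_add_rpow_one_sub_le {r s : ℝ} (hr : 1 ≤ r) (hs₀ : 0 ≤ s) (hs₁ : s ≤ 1) :
    (1 + s) ^ r + (1 - s) ^ r - 2 ≤ (2 ^ r - 1) * s := by
  have hchord := (convexOn_rpow hr).2 (mem_Ici.2 zero_le_one) (mem_Ici.2 zero_le_two)
    (sub_nonneg.2 hs₁) hs₀ (sub_add_cancel 1 s)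
  simp only [smul_eq_mul, one_rpow] at hchord
  rw [show (1 - s) * 1 + s * 2 = 1 + s by ring] at hchord
  have hsub : (1 - s) ^ r ≤ 1 := rpow_le_one (by linarith) (by linarith) (by linarith)
  linarith

noncomputable def rpowSecondDiffQuot (r α ξ η : ℝ) : ℝ :=
  ((ξ + 2 * η) ^ r + (ξ - 2 * η) ^ r - 2 * ξ ^ r) / η ^ (1 + α)

namespace rpowSecondDiffQuot

variable {r α : ℝ}

lemma comp_mul {ξ t : ℝ} (hξ : 0 < ξ) (ht₀ : 0 ≤ t) (ht₁ : t ≤ 1 / 2) :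
    rpowSecondDiffQuot r α ξ (ξ * t) = ξ ^ (r - (1 + α)) * rpowSecondDiffQuot r α 1 t := by
  unfold rpowSecondDiffQuot
  rw [show ξ + 2 * (ξ * t) = ξ * (1 + 2 * t) by ring,
    show ξ - 2 * (ξ * t) = ξ * (1 - 2 * t) by ring,
    mul_rpow hξ.le (by linarith), mul_rpow hξ.le (by linarith), mul_rpow hξ.le ht₀,
    rpow_sub hξ, one_rpow, ← mul_div_mul_comm]
  ring_nf

lemma integral_eq_rpow_mul {ξ : ℝ} (hξ : 0 < ξ) :
    ∫ η in 0..ξ / 2, rpowSecondDiffQuot r α ξ η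
      = ξ ^ (r - α) * ∫ t in 0..1 / 2, rpowSecondDiffQuot r α 1 t := by
  have hscaled : ∫ t in 0..1 / 2, rpowSecondDiffQuot r α ξ (ξ * t)
      = ξ ^ (r - (1 + α)) * ∫ t in 0..1 / 2, rpowSecondDiffQuot r α 1 t := by
    rw [← intervalIntegral.integral_const_mul]
    refine intervalIntegral.integral_congr fun t ht => ?_
    rw [uIcc_of_le (by norm_num)] at ht
    exact comp_mul hξ ht.1 ht.2
  rw [intervalIntegral.integral_comp_mul_left _ hξ.ne', mul_zero, smul_eq_mul,
    mul_one_div] at hscaled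
  rw [show r - α = 1 + (r - (1 + α)) by ring, rpow_add hξ, rpow_one, mul_assoc, ← hscaled,
    mul_inv_cancel_left₀ hξ.ne']

lemma pos_at_one (hr : 1 < r) {t : ℝ} (ht₀ : 0 < t) (ht₁ : t ≤ 1 / 2) :
    0 < rpowSecondDiffQuot r α 1 t := by
  have := two_lt_rpow_one_add_add_rpow_one_sub hr (by linarith : 0 < 2 * t) (by linarith)
  exact div_pos (by rw [one_rpow]; linarith) (rpow_pos_of_pos ht₀ _)

lemma le_at_one (hr : 1 ≤ r) {t : ℝ} (ht₀ : 0 < t) (ht₁ : t ≤ 1 / 2) :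
    rpowSecondDiffQuot r α 1 t ≤ 2 * (2 ^ r - 1) * t ^ (-α) := by
  have hnum := rpow_one_add_add_rpow_one_sub_le hr (by linarith : 0 ≤ 2 * t) (by linarith)
  have hpow : t ^ (-α) = t / t ^ (1 + α) := by
    rw [rpow_add ht₀, rpow_one, div_mul_cancel_left₀ ht₀.ne', rpow_neg ht₀.le]
  rw [rpowSecondDiffQuot, one_rpow, hpow, ← mul_div_assoc]
  exact div_le_div_of_nonneg_right (by linarith) (rpow_nonneg ht₀.le _)

lemma intervalIntegrable_at_one (hr : 1 < r) (hα : α < 1) :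
    IntervalIntegrable (rpowSecondDiffQuot r α 1) volume 0 (1 / 2) := by
  have hdom : IntervalIntegrable (fun t : ℝ => 2 * (2 ^ r - 1) * t ^ (-α)) volume 0 (1 / 2) :=
    (intervalIntegral.intervalIntegrable_rpow' (by linarith)).const_mul _
  have hmeas : Measurable (rpowSecondDiffQuot r α 1) := by unfold rpowSecondDiffQuot; fun_prop
  refine hdom.mono_fun' hmeas.aestronglyMeasurable ?_
  rw [uIoc_of_le (by norm_num)]
  refine (ae_restrict_iff' measurableSet_Ioc).2 (Filter.Eventually.of_forall fun t ht => ?_)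
  dsimp only
  rw [norm_of_nonneg (pos_at_one hr ht.1 ht.2).le]
  exact le_at_one hr.le ht.1 ht.2

lemma integral_at_one_pos (hr : 1 < r) (hα : α < 1) :
    0 < ∫ t in 0..1 / 2, rpowSecondDiffQuot r α 1 t :=
  intervalIntegral.intervalIntegral_pos_of_pos_on (intervalIntegrable_at_one hr hα)
    (fun _ ht => pos_at_one hr ht.1 ht.2.le) (by norm_num)

end rpowSecondDiffQuot

theorem stmt14_general (α r : ℝ) (hα1 : α < 1) (hr1 : 1 < r) :
    ∃ C₂ > 0, ∃ ξ₀ > 0, ∀ ξ : ℝ, 0 < ξ → ξ ≤ ξ₀ →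
      ∫ η in Ioc (0:ℝ) (ξ / 2),
          (((ξ + 2 * η) - (ξ + 2 * η) ^ r) + ((ξ - 2 * η) - (ξ - 2 * η) ^ r)
            - 2 * (ξ - ξ ^ r)) / η ^ (1 + α)
        ≤ -C₂ * ξ ^ (r - α) := by
  refine ⟨_, rpowSecondDiffQuot.integral_at_one_pos hr1 hα1, 1, one_pos, fun ξ hξ _ => le_of_eq ?_⟩
  have hintegrand : ∀ η : ℝ, (((ξ + 2 * η) - (ξ + 2 * η) ^ r) + ((ξ - 2 * η) - (ξ - 2 * η) ^ r)
      - 2 * (ξ - ξ ^ r)) / η ^ (1 + α) = -rpowSecondDiffQuot r α ξ η := fun η => by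
    rw [rpowSecondDiffQuot, ← neg_div]
    ring_nf
  simp_rw [hintegrand, integral_neg, ← intervalIntegral.integral_of_le (by linarith : 0 ≤ ξ / 2),
    rpowSecondDiffQuot.integral_eq_rpow_mul hξ]
  ring

theorem stmt14 (α r : ℝ) (hα0 : 0 < α) (hα1 : α < 1) (hr1 : 1 < r) (hr : r < 1 + α) :
    ∃ C₂ > 0, ∃ ξ₀ > 0, ∀ ξ : ℝ, 0 < ξ → ξ ≤ ξ₀ →
      ∫ η in Ioc (0:ℝ) (ξ / 2),
          (((ξ + 2 * η) - (ξ + 2 * η) ^ r) + ((ξ - 2 * η) - (ξ - 2 * η) ^ r)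
            - 2 * (ξ - ξ ^ r)) / η ^ (1 + α)
        ≤ -C₂ * ξ ^ (r - α) :=
  stmt14_general α r hα1 hr1
end

section
/- Let ω be a modulus of continuity, differentiable on (0, ∞), and let u: ℝⁿ → ℝⁿ have modulus of continuity Ω (i.e. |u(x) - u(y)| ≤ Ω(|x-y|)). Suppose θ: ℝⁿ → ℝ is differentiable, has modulus of continuity ω, and there exist x ≠ y with θ(x) - θ(y) = ω(|x - y|). Then, writing ξ = |x - y|, one has u(x)·∇θ(x) - u(y)·∇θ(y) ≤ Ω(ξ) ω'(ξ). -/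
/-!
Along the paths `t ↦ x + t • u x` and `t ↦ y + t • u y` the increment of `θ` is at most
`ω (ξ + t Ω(ξ))`, and the two sides agree at `t = 0`. So the difference has a one-sided maximum
at `t = 0`, and comparing the right derivatives there gives the inequality.
-/

open Set

theorem HasDerivAt.le_of_forall_le_of_eq {f g : ℝ → ℝ} {f' g' a : ℝ}
    (hf : HasDerivAt f f' a) (hg : HasDerivAt g g' a)
    (hle : ∀ t, a ≤ t → f t ≤ g t) (heq : f a = g a) : f' ≤ g' := by
  have hmax : IsLocalMaxOn (f - g) (Ici a) a :=
    Filter.mem_of_superset self_mem_nhdsWithin fun t ht => by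
      simpa [heq] using hle t ht
  have hone : (1 : ℝ) ∈ posTangentConeAt (Ici a) a :=
    mem_posTangentConeAt_of_segment_subset (by simp [segment_eq_Icc, Icc_subset_Ici_self])
  simpa using hmax.hasFDerivWithinAt_nonpos (hf.sub hg).hasDerivWithinAt.hasFDerivWithinAt hone

theorem norm_add_smul_sub_add_smul_le {E : Type*} [SeminormedAddCommGroup E] [NormedSpace ℝ E]
    (x y v w : E) {t : ℝ} (ht : 0 ≤ t) :
    ‖(x + t • v) - (y + t • w)‖ ≤ ‖x - y‖ + t * ‖v - w‖ := by
  calc ‖(x + t • v) - (y + t • w)‖ = ‖(x - y) + t • (v - w)‖ := by congr 1; module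
    _ ≤ ‖x - y‖ + t * ‖v - w‖ := by
      simpa [norm_smul, abs_of_nonneg ht] using norm_add_le (x - y) (t • (v - w))

theorem HasFDerivAt.hasDerivAt_comp_add_smul {E : Type*} [NormedAddCommGroup E] [NormedSpace ℝ E]
    {θ : E → ℝ} {θ' : E →L[ℝ] ℝ} {x : E} (hθ : HasFDerivAt θ θ' x) (v : E) :
    HasDerivAt (fun t : ℝ => θ (x + t • v)) (θ' v) 0 := by
  have hline : HasDerivAt (fun t : ℝ => x + t • v) v 0 := by
    simpa using ((hasDerivAt_id (0 : ℝ)).smul_const v).const_add x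
  exact (by simpa using hθ : HasFDerivAt θ θ' (x + (0:ℝ) • v)).comp_hasDerivAt 0 hline

theorem fderiv_sub_fderiv_le_of_touch {E : Type*} [NormedAddCommGroup E] [NormedSpace ℝ E]
    {ω : ℝ → ℝ} {θ : E → ℝ} {x y v w : E} {η : ℝ}
    (hmono : MonotoneOn ω (Ici 0)) (hω : DifferentiableAt ℝ ω ‖x - y‖)
    (hθx : DifferentiableAt ℝ θ x) (hθy : DifferentiableAt ℝ θ y)
    (hmoc : ∀ a b, θ a - θ b ≤ ω ‖a - b‖) (htouch : θ x - θ y = ω ‖x - y‖)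
    (hvw : ‖v - w‖ ≤ η) :
    fderiv ℝ θ x v - fderiv ℝ θ y w ≤ η * deriv ω ‖x - y‖ := by
  set ξ := ‖x - y‖
  have hη : 0 ≤ η := (norm_nonneg _).trans hvw
  have hbound : HasDerivAt (fun t : ℝ => ω (ξ + t * η)) (η * deriv ω ξ) 0 := by
    have hline : HasDerivAt (fun t : ℝ => ξ + t * η) η 0 := by
      simpa using ((hasDerivAt_id (0 : ℝ)).mul_const η).const_add ξ
    have hω0 : HasDerivAt ω (deriv ω ξ) (ξ + 0 * η) := by simpa using hω.hasDerivAt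
    exact (hω0.comp 0 hline).congr_deriv (mul_comm _ _)
  refine ((hθx.hasFDerivAt.hasDerivAt_comp_add_smul v).sub
    (hθy.hasFDerivAt.hasDerivAt_comp_add_smul w)).le_of_forall_le_of_eq hbound ?_
    (by simp [htouch])
  intro t ht
  calc θ (x + t • v) - θ (y + t • w) ≤ ω ‖(x + t • v) - (y + t • w)‖ := hmoc _ _
    _ ≤ ω (ξ + t * η) := hmono (norm_nonneg _) (by simp only [mem_Ici]; positivity)
        ((norm_add_smul_sub_add_smul_le x y v w ht).trans (by gcongr))

theorem stmt17_general (n : ℕ) (ω Ω : ℝ → ℝ)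
    (hmono : MonotoneOn ω (Ici 0))
    (hdiff : DifferentiableOn ℝ ω (Ioi 0))
    (u : EuclideanSpace ℝ (Fin n) → EuclideanSpace ℝ (Fin n))
    (hu : ∀ x y : EuclideanSpace ℝ (Fin n), ‖u x - u y‖ ≤ Ω ‖x - y‖)
    (θ : EuclideanSpace ℝ (Fin n) → ℝ) (hθ : Differentiable ℝ θ)
    (hmoc : ∀ x y : EuclideanSpace ℝ (Fin n), |θ x - θ y| ≤ ω ‖x - y‖)
    (x y : EuclideanSpace ℝ (Fin n)) (hxy : x ≠ y)
    (htouch : θ x - θ y = ω ‖x - y‖) :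
    inner ℝ (u x) (gradient θ x) - inner ℝ (u y) (gradient θ y)
      ≤ Ω ‖x - y‖ * deriv ω ‖x - y‖ := by
  have hξ : 0 < ‖x - y‖ := norm_pos_iff.2 (sub_ne_zero.2 hxy)
  simp only [inner_gradient_right, RCLike.conj_to_real]
  exact fderiv_sub_fderiv_le_of_touch hmono (hdiff.differentiableAt (Ioi_mem_nhds hξ))
    (hθ x) (hθ y) (fun a b => (le_abs_self _).trans (hmoc a b)) htouch (hu x y)

theorem stmt17 (n : ℕ) (ω Ω : ℝ → ℝ)
    (hcont : Continuous ω) (hmono : MonotoneOn ω (Ici 0))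
    (hconc : ConcaveOn ℝ (Ici 0) ω) (h0 : ω 0 = 0)
    (hnonneg : ∀ x ∈ Ici (0:ℝ), 0 ≤ ω x)
    (hdiff : DifferentiableOn ℝ ω (Ioi 0))
    (hΩmono : MonotoneOn Ω (Ici 0)) (hΩnonneg : ∀ x ∈ Ici (0:ℝ), 0 ≤ Ω x)
    (u : EuclideanSpace ℝ (Fin n) → EuclideanSpace ℝ (Fin n))
    (hu : ∀ x y : EuclideanSpace ℝ (Fin n), ‖u x - u y‖ ≤ Ω ‖x - y‖)
    (θ : EuclideanSpace ℝ (Fin n) → ℝ) (hθ : Differentiable ℝ θ)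
    (hmoc : ∀ x y : EuclideanSpace ℝ (Fin n), |θ x - θ y| ≤ ω ‖x - y‖)
    (x y : EuclideanSpace ℝ (Fin n)) (hxy : x ≠ y)
    (htouch : θ x - θ y = ω ‖x - y‖) :
    inner ℝ (u x) (gradient θ x) - inner ℝ (u y) (gradient θ y)
      ≤ Ω ‖x - y‖ * deriv ω ‖x - y‖ :=
  stmt17_general n ω Ω hmono hdiff u hu θ hθ hmoc x y hxy htouch
end

section
/- Let 0 < α < 1 and let ω: [0, ∞) → [0, ∞) be a modulus of continuity with ω(η) ≤ η for all η. Define Ω₁(ξ) = ∫₀^ξ ω(η)/η dη + ξ ∫_ξ^∞ ω(η)/η² dη and Ω₂[ν](ξ) = ∫₀^ξ ν(η)/η^α dη + ξ ∫_ξ^∞ ν(η)/η^{1+α} dη for a modulus ν. Then there is a constant C (depending only on α) such that Ω₂[Ω₁](ξ) ≤ C ( ξ^{1-α} ∫₀^ξ ω(η)/η dη + ξ ∫_ξ^∞ ω(η)/η^{α+1} dη ) for all ξ > 0, provided all integrals are finite. -/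
/-!
Both moduli are integrals against one kernel: `Ω₂[ν](ξ) = ∫_{η>0} ν(η) η^{-α} min(1, ξ/η) dη`,
and `Ω₁` is the case `α = 1`. After passing to `ℝ≥0∞` (where Tonelli needs no integrability),
`Ω₂[Ω₁](ξ) ≤ ∫ ω(σ) K(σ) dσ` with `K(σ) = ∫ σ⁻¹ min(1, η/σ) η^{-α} min(1, ξ/η) dη`.
For `m = max σ ξ` one has `min(1, η/σ) min(1, ξ/η) ≤ (ξ/m) min(1, m/η)`, so `K(σ)` is bounded
by a rescaled copy of the kernel at scale `m`, whose total mass is `m^{1-α}/(α(1-α))`. Hence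
`K(σ) ≤ ξ σ⁻¹ m^{-α}/(α(1-α))`, and splitting `∫ ω(σ) ξ σ⁻¹ max(σ, ξ)^{-α} dσ` at `σ = ξ`
gives the two terms of the bound.
-/

open Real Set MeasureTheory

noncomputable def Omega1 (ω : ℝ → ℝ) (ξ : ℝ) : ℝ :=
  (∫ η in Ioc (0:ℝ) ξ, ω η / η) + ξ * ∫ η in Ioi ξ, ω η / η ^ 2

noncomputable def Omega2 (α : ℝ) (ν : ℝ → ℝ) (ξ : ℝ) : ℝ :=
  (∫ η in Ioc (0:ℝ) ξ, ν η / η ^ α) + ξ * ∫ η in Ioi ξ, ν η / η ^ (1 + α)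

open scoped ENNReal

lemma ofReal_integral_le_lintegral_ofReal {X : Type*} [MeasurableSpace X] {μ : Measure X}
    (f : X → ℝ) : ENNReal.ofReal (∫ x, f x ∂μ) ≤ ∫⁻ x, ENNReal.ofReal (f x) ∂μ := by
  refine ENNReal.ofReal_le_of_le_toReal ?_
  by_cases hf : Integrable f μ
  · rw [integral_eq_lintegral_pos_part_sub_lintegral_neg_part hf]
    exact sub_le_self _ ENNReal.toReal_nonneg
  · rw [integral_undef hf]
    exact ENNReal.toReal_nonneg

lemma lintegral_lintegral_mul_mul_swap {X Y : Type*} [MeasurableSpace X] [MeasurableSpace Y]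
    {μ : Measure X} {ν : Measure Y} [SFinite μ] [SFinite ν]
    {f : Y → ℝ≥0∞} {g : X → Y → ℝ≥0∞} {h : X → ℝ≥0∞}
    (hf : Measurable f) (hg : Measurable (Function.uncurry g)) (hh : Measurable h) :
    ∫⁻ x, (∫⁻ y, f y * g x y ∂ν) * h x ∂μ = ∫⁻ y, f y * ∫⁻ x, g x y * h x ∂μ ∂ν := by
  calc ∫⁻ x, (∫⁻ y, f y * g x y ∂ν) * h x ∂μ
      = ∫⁻ x, ∫⁻ y, f y * g x y * h x ∂ν ∂μ :=
        lintegral_congr fun x =>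
          (lintegral_mul_const _ (hf.mul (hg.comp measurable_prodMk_left))).symm
    _ = ∫⁻ y, ∫⁻ x, f y * g x y * h x ∂μ ∂ν :=
        lintegral_lintegral_swap
          (((hf.comp measurable_snd).mul hg).mul (hh.comp measurable_fst)).aemeasurable
    _ = ∫⁻ y, f y * ∫⁻ x, g x y * h x ∂μ ∂ν := by
        refine lintegral_congr fun y => ?_
        simp_rw [mul_assoc]
        exact lintegral_const_mul _ ((hg.comp measurable_prodMk_right).mul hh)

lemma setLIntegral_Ioi_eq_Ioc_add_Ioi (f : ℝ → ℝ≥0∞) {a b : ℝ} (hab : a ≤ b) :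
    ∫⁻ x in Ioi a, f x = (∫⁻ x in Ioc a b, f x) + ∫⁻ x in Ioi b, f x := by
  rw [← Ioc_union_Ioi_eq_Ioi hab, lintegral_union measurableSet_Ioi (Ioc_disjoint_Ioi le_rfl)]

lemma lintegral_Ioc_rpow {a p : ℝ} (ha : 0 ≤ a) (hp : -1 < p) :
    ∫⁻ x in Ioc 0 a, ENNReal.ofReal (x ^ p) = ENNReal.ofReal (a ^ (p + 1) / (p + 1)) := by
  have hint : IntegrableOn (fun x : ℝ => x ^ p) (Ioc 0 a) :=
    (intervalIntegral.intervalIntegrable_rpow' hp (a := 0) (b := a)).1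
  rw [← ofReal_integral_eq_lintegral_ofReal hint, ← intervalIntegral.integral_of_le ha,
    integral_rpow (Or.inl hp), zero_rpow (by linarith), sub_zero]
  filter_upwards [ae_restrict_mem measurableSet_Ioc] with x hx
  exact rpow_nonneg hx.1.le p

lemma lintegral_Ioi_rpow {a p : ℝ} (ha : 0 < a) (hp : p < -1) :
    ∫⁻ x in Ioi a, ENNReal.ofReal (x ^ p) = ENNReal.ofReal (-a ^ (p + 1) / (p + 1)) := by
  rw [← ofReal_integral_eq_lintegral_ofReal (integrableOn_Ioi_rpow_of_lt hp ha),
    integral_Ioi_rpow_of_lt hp ha]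
  filter_upwards [ae_restrict_mem measurableSet_Ioi] with x hx
  exact rpow_nonneg (ha.trans hx).le p

lemma integrableOn_div_self_Ioc {f : ℝ → ℝ} (hf : Measurable f) (a : ℝ)
    (hle : ∀ x ∈ Ioi (0:ℝ), |f x| ≤ x) : IntegrableOn (fun x => f x / x) (Ioc 0 a) := by
  refine Measure.integrableOn_of_bounded (M := 1) measure_Ioc_lt_top.ne
    (hf.div measurable_id).aestronglyMeasurable ?_
  filter_upwards [ae_restrict_mem measurableSet_Ioc] with x hx
  rw [norm_div, Real.norm_eq_abs, Real.norm_eq_abs, abs_of_pos hx.1]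
  exact div_le_one_of_le₀ (hle x hx.1) hx.1.le

noncomputable def omegaKernel (β ξ η : ℝ) : ℝ := η ^ (-β) * min 1 (ξ / η)

lemma omegaKernel_nonneg (β : ℝ) {ξ η : ℝ} (hξ : 0 ≤ ξ) (hη : 0 ≤ η) :
    0 ≤ omegaKernel β ξ η :=
  mul_nonneg (rpow_nonneg hη _) (le_min zero_le_one (div_nonneg hξ hη))

lemma measurable_omegaKernel (β ξ : ℝ) : Measurable (omegaKernel β ξ) := by
  unfold omegaKernel; fun_prop

lemma measurable_omegaKernel_uncurry (β : ℝ) : Measurable (Function.uncurry (omegaKernel β)) := by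
  unfold omegaKernel; fun_prop

lemma Omega1_eq_Omega2_one : Omega1 = Omega2 1 := by
  funext ω ξ
  simp only [Omega1, Omega2, rpow_one, one_add_one_eq_two, rpow_two]

lemma lintegral_mul_omegaKernel (ν : ℝ → ℝ≥0∞) (β : ℝ) {ξ : ℝ} (hξ : 0 ≤ ξ) :
    ∫⁻ η in Ioi 0, ν η * ENNReal.ofReal (omegaKernel β ξ η) =
      (∫⁻ η in Ioc 0 ξ, ν η * ENNReal.ofReal (η ^ (-β))) +
        ENNReal.ofReal ξ * ∫⁻ η in Ioi ξ, ν η * ENNReal.ofReal (η ^ (-(1 + β))) := by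
  rw [setLIntegral_Ioi_eq_Ioc_add_Ioi _ hξ, ← lintegral_const_mul' _ _ ENNReal.ofReal_ne_top]
  congr 1
  · refine setLIntegral_congr_fun measurableSet_Ioc fun η hη => ?_
    rw [omegaKernel, min_eq_left ((one_le_div hη.1).2 hη.2), mul_one]
  · refine setLIntegral_congr_fun measurableSet_Ioi fun η hη => ?_
    have hη0 : 0 < η := hξ.trans_lt hη
    have key : η ^ (-β) * (ξ / η) = ξ * η ^ (-(1 + β)) := by
      rw [neg_add, rpow_add hη0, rpow_neg_one]; field_simp
    rw [omegaKernel, min_eq_right ((div_le_one hη0).2 hη.le), key, ENNReal.ofReal_mul hξ]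
    ring

lemma ofReal_Omega2_le (β : ℝ) (ν : ℝ → ℝ) {ξ : ℝ} (hξ : 0 ≤ ξ) :
    ENNReal.ofReal (Omega2 β ν ξ) ≤
      ∫⁻ η in Ioi 0, ENNReal.ofReal (ν η) * ENNReal.ofReal (omegaKernel β ξ η) := by
  have hdiv : ∀ c : ℝ, ∀ η ∈ Ioi (0:ℝ),
      ENNReal.ofReal (ν η / η ^ c) = ENNReal.ofReal (ν η) * ENNReal.ofReal (η ^ (-c)) := by
    intro c η hη
    rw [div_eq_mul_inv, ← rpow_neg hη.le, ENNReal.ofReal_mul' (rpow_nonneg hη.le _)]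
  rw [lintegral_mul_omegaKernel _ _ hξ, Omega2,
    ← setLIntegral_congr_fun measurableSet_Ioc fun η hη => hdiv β η hη.1,
    ← setLIntegral_congr_fun measurableSet_Ioi fun η hη => hdiv _ η (hξ.trans_lt hη)]
  calc _ ≤ ENNReal.ofReal (∫ η in Ioc 0 ξ, ν η / η ^ β) +
        ENNReal.ofReal ξ * ENNReal.ofReal (∫ η in Ioi ξ, ν η / η ^ (1 + β)) := by
        rw [← ENNReal.ofReal_mul hξ]; exact ENNReal.ofReal_add_le
    _ ≤ _ := by gcongr <;> exact ofReal_integral_le_lintegral_ofReal _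

lemma lintegral_omegaKernel {β m : ℝ} (hβ0 : 0 < β) (hβ1 : β < 1) (hm : 0 < m) :
    ∫⁻ η in Ioi 0, ENNReal.ofReal (omegaKernel β m η) =
      ENNReal.ofReal (m ^ (1 - β) / (β * (1 - β))) := by
  have h := lintegral_mul_omegaKernel (fun _ => 1) β hm.le
  simp only [one_mul] at h
  have hβ1' : 0 < 1 - β := by linarith
  have hmm : m * m ^ (-β) = m ^ (1 - β) := by rw [sub_eq_add_neg, rpow_add hm, rpow_one]
  rw [h, lintegral_Ioc_rpow hm.le (by linarith), lintegral_Ioi_rpow hm (by linarith),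
    show -β + 1 = 1 - β by ring, show -(1 + β) + 1 = -β by ring, neg_div_neg_eq,
    ← ENNReal.ofReal_mul hm.le,
    ← ENNReal.ofReal_add (div_nonneg (rpow_nonneg hm.le _) hβ1'.le) (by positivity), ← hmm]
  congr 1
  field_simp
  ring

lemma min_one_div_mul_min_one_div_le {σ η ξ : ℝ} (hσ : 0 < σ) (hη : 0 < η) (hξ : 0 < ξ) :
    min 1 (η / σ) * min 1 (ξ / η) ≤ ξ / max σ ξ * min 1 (max σ ξ / η) := by
  have hm : 0 < max σ ξ := lt_max_of_lt_left hσ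
  have h2 : 0 ≤ min 1 (ξ / η) := le_min zero_le_one (by positivity)
  rw [mul_min_of_nonneg 1 (max σ ξ / η) (by positivity), mul_one, div_mul_div_cancel₀ hm.ne']
  refine le_min ?_ ((mul_le_of_le_one_left h2 (min_le_left _ _)).trans (min_le_right _ _))
  rcases le_total σ ξ with h | h
  · rw [max_eq_right h, div_self hξ.ne']
    exact mul_le_one₀ (min_le_left _ _) h2 (min_le_left _ _)
  · rw [max_eq_left h]
    calc _ ≤ η / σ * (ξ / η) := mul_le_mul (min_le_right _ _) (min_le_right _ _) h2 (by positivity)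
      _ = ξ / σ := by field_simp

lemma omegaKernel_one_mul_omegaKernel_le (α : ℝ) {σ η ξ : ℝ} (hσ : 0 < σ) (hη : 0 < η)
    (hξ : 0 < ξ) :
    omegaKernel 1 η σ * omegaKernel α ξ η ≤ ξ / (σ * max σ ξ) * omegaKernel α (max σ ξ) η := by
  unfold omegaKernel
  calc σ ^ (-1 : ℝ) * min 1 (η / σ) * (η ^ (-α) * min 1 (ξ / η))
      = σ⁻¹ * η ^ (-α) * (min 1 (η / σ) * min 1 (ξ / η)) := by rw [rpow_neg_one]; ring
    _ ≤ σ⁻¹ * η ^ (-α) * (ξ / max σ ξ * min 1 (max σ ξ / η)) :=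
        mul_le_mul_of_nonneg_left (min_one_div_mul_min_one_div_le hσ hη hξ) (by positivity)
    _ = ξ / (σ * max σ ξ) * (η ^ (-α) * min 1 (max σ ξ / η)) := by field_simp

lemma lintegral_omegaKernel_one_mul_omegaKernel_le {α σ ξ : ℝ} (hα0 : 0 < α) (hα1 : α < 1)
    (hσ : 0 < σ) (hξ : 0 < ξ) :
    ∫⁻ η in Ioi 0, ENNReal.ofReal (omegaKernel 1 η σ) * ENNReal.ofReal (omegaKernel α ξ η) ≤
      ENNReal.ofReal (1 / (α * (1 - α))) * ENNReal.ofReal (ξ / σ * max σ ξ ^ (-α)) := by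
  have hm : 0 < max σ ξ := lt_max_of_lt_left hσ
  calc _ ≤ ∫⁻ η in Ioi 0, ENNReal.ofReal (ξ / (σ * max σ ξ)) *
          ENNReal.ofReal (omegaKernel α (max σ ξ) η) := by
        refine setLIntegral_mono' measurableSet_Ioi fun η hη => ?_
        rw [← ENNReal.ofReal_mul (omegaKernel_nonneg _ hη.le hσ.le),
          ← ENNReal.ofReal_mul (by positivity)]
        exact ENNReal.ofReal_le_ofReal (omegaKernel_one_mul_omegaKernel_le α hσ hη hξ)
    _ = ENNReal.ofReal (ξ / (σ * max σ ξ)) *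
          ENNReal.ofReal (max σ ξ ^ (1 - α) / (α * (1 - α))) := by
        rw [lintegral_const_mul' _ _ ENNReal.ofReal_ne_top, lintegral_omegaKernel hα0 hα1 hm]
    _ = _ := by
        rw [← ENNReal.ofReal_mul (by positivity), ← ENNReal.ofReal_mul (by positivity)]
        congr 1
        rw [sub_eq_add_neg, rpow_add hm, rpow_one]
        field_simp

lemma ofReal_Omega2_Omega1_le {α : ℝ} (hα0 : 0 < α) (hα1 : α < 1) {ω : ℝ → ℝ}
    (hω : Measurable ω) {ξ : ℝ} (hξ : 0 < ξ) :
    ENNReal.ofReal (Omega2 α (Omega1 ω) ξ) ≤ ENNReal.ofReal (1 / (α * (1 - α))) *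
      ∫⁻ σ in Ioi 0, ENNReal.ofReal (ω σ) * ENNReal.ofReal (ξ / σ * max σ ξ ^ (-α)) := by
  calc ENNReal.ofReal (Omega2 α (Omega1 ω) ξ)
      ≤ ∫⁻ η in Ioi 0, ENNReal.ofReal (Omega1 ω η) * ENNReal.ofReal (omegaKernel α ξ η) :=
        ofReal_Omega2_le α _ hξ.le
    _ ≤ ∫⁻ η in Ioi 0, (∫⁻ σ in Ioi 0, ENNReal.ofReal (ω σ) *
          ENNReal.ofReal (omegaKernel 1 η σ)) * ENNReal.ofReal (omegaKernel α ξ η) := by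
        refine setLIntegral_mono' measurableSet_Ioi fun η hη => ?_
        rw [Omega1_eq_Omega2_one]
        gcongr
        exact ofReal_Omega2_le 1 ω hη.le
    _ = ∫⁻ σ in Ioi 0, ENNReal.ofReal (ω σ) * ∫⁻ η in Ioi 0,
          ENNReal.ofReal (omegaKernel 1 η σ) * ENNReal.ofReal (omegaKernel α ξ η) :=
        lintegral_lintegral_mul_mul_swap hω.ennreal_ofReal
          (measurable_omegaKernel_uncurry 1).ennreal_ofReal
          (measurable_omegaKernel α ξ).ennreal_ofReal
    _ ≤ ∫⁻ σ in Ioi 0, ENNReal.ofReal (1 / (α * (1 - α))) *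
          (ENNReal.ofReal (ω σ) * ENNReal.ofReal (ξ / σ * max σ ξ ^ (-α))) := by
        refine setLIntegral_mono' measurableSet_Ioi fun σ hσ => ?_
        rw [mul_left_comm]
        gcongr
        exact lintegral_omegaKernel_one_mul_omegaKernel_le hα0 hα1 hσ hξ
    _ = _ := lintegral_const_mul' _ _ ENNReal.ofReal_ne_top

lemma integrals_div_rpow_nonneg (α : ℝ) {ξ : ℝ} (hξ : 0 < ξ) {f : ℝ → ℝ}
    (hf : ∀ σ ∈ Ioi (0:ℝ), 0 ≤ f σ) :
    0 ≤ (∫ σ in Ioc 0 ξ, f σ / σ) ∧ 0 ≤ ∫ σ in Ioi ξ, f σ / σ ^ (α + 1) :=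
  ⟨setIntegral_nonneg measurableSet_Ioc fun σ hσ => div_nonneg (hf σ hσ.1) hσ.1.le,
    setIntegral_nonneg measurableSet_Ioi fun σ hσ =>
      div_nonneg (hf σ (hξ.trans hσ)) (rpow_nonneg (hξ.trans hσ).le _)⟩

lemma lintegral_mul_weight_eq {α ξ : ℝ} (hξ : 0 < ξ) {f : ℝ → ℝ} (hf : ∀ σ ∈ Ioi (0:ℝ), 0 ≤ f σ)
    (h₁ : IntegrableOn (fun σ => f σ / σ) (Ioc 0 ξ))
    (h₂ : IntegrableOn (fun σ => f σ / σ ^ (α + 1)) (Ioi ξ)) :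
    ∫⁻ σ in Ioi 0, ENNReal.ofReal (f σ) * ENNReal.ofReal (ξ / σ * max σ ξ ^ (-α)) =
      ENNReal.ofReal (ξ ^ (1 - α) * (∫ σ in Ioc 0 ξ, f σ / σ) +
        ξ * ∫ σ in Ioi ξ, f σ / σ ^ (α + 1)) := by
  obtain ⟨hI₁, hI₂⟩ := integrals_div_rpow_nonneg α hξ hf
  rw [ENNReal.ofReal_add (by positivity) (by positivity),
    ENNReal.ofReal_mul (by positivity), ENNReal.ofReal_mul hξ.le,
    ofReal_integral_eq_lintegral_ofReal h₁ ?_, ofReal_integral_eq_lintegral_ofReal h₂ ?_,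
    ← lintegral_const_mul' _ _ ENNReal.ofReal_ne_top,
    ← lintegral_const_mul' _ _ ENNReal.ofReal_ne_top,
    setLIntegral_Ioi_eq_Ioc_add_Ioi _ hξ.le]
  · congr 1
    · refine setLIntegral_congr_fun measurableSet_Ioc fun σ hσ => ?_
      rw [max_eq_right hσ.2, ← ENNReal.ofReal_mul (hf σ hσ.1),
        ← ENNReal.ofReal_mul (by positivity)]
      congr 1
      rw [sub_eq_add_neg, rpow_add hξ, rpow_one]
      ring
    · refine setLIntegral_congr_fun measurableSet_Ioi fun σ hσ => ?_
      have hσ0 : 0 < σ := hξ.trans hσ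
      rw [max_eq_left hσ.le, ← ENNReal.ofReal_mul (hf σ hσ0), ← ENNReal.ofReal_mul hξ.le]
      congr 1
      rw [rpow_add_one hσ0.ne', rpow_neg hσ0.le]
      field_simp
  · filter_upwards [ae_restrict_mem measurableSet_Ioi] with σ hσ
    exact div_nonneg (hf σ (hξ.trans hσ)) (rpow_nonneg (hξ.trans hσ).le _)
  · filter_upwards [ae_restrict_mem measurableSet_Ioc] with σ hσ
    exact div_nonneg (hf σ hσ.1) hσ.1.le

theorem stmt18 (α : ℝ) (hα0 : 0 < α) (hα1 : α < 1) :
    ∃ C > 0, ∀ ω : ℝ → ℝ,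
      Continuous ω → MonotoneOn ω (Ici 0) → ConcaveOn ℝ (Ici 0) ω → ω 0 = 0 →
      (∀ η : ℝ, 0 ≤ η → ω η ≤ η) → (∀ η ∈ Ici (0:ℝ), 0 ≤ ω η) →
      ∀ ξ : ℝ, 0 < ξ →
      (∀ ξ' : ℝ, 0 < ξ' → IntegrableOn (fun η => ω η / η ^ 2) (Ioi ξ')) →
      (∀ ξ' : ℝ, 0 < ξ' → IntegrableOn (fun η => ω η / η ^ (1 + α)) (Ioi ξ')) →
      IntegrableOn (fun η => Omega1 ω η / η ^ α) (Ioc (0:ℝ) ξ) →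
      IntegrableOn (fun η => Omega1 ω η / η ^ (1 + α)) (Ioi ξ) →
      Omega2 α (Omega1 ω) ξ ≤
        C * (ξ ^ (1 - α) * (∫ η in Ioc (0:ℝ) ξ, ω η / η)
          + ξ * ∫ η in Ioi ξ, ω η / η ^ (α + 1)) := by
  have hα1' : 0 < 1 - α := by linarith
  refine ⟨1 / (α * (1 - α)), by positivity, ?_⟩
  intro ω hω _ _ _ hωle hω0 ξ hξ _ hIα _ _
  have hω_nonneg : ∀ σ ∈ Ioi (0:ℝ), 0 ≤ ω σ := fun σ hσ => hω0 σ (Ioi_subset_Ici_self hσ)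
  have hI₁ := integrableOn_div_self_Ioc hω.measurable ξ fun σ hσ =>
    (abs_of_nonneg (hω_nonneg σ hσ)).trans_le (hωle σ (le_of_lt hσ))
  have hI₂ : IntegrableOn (fun σ => ω σ / σ ^ (α + 1)) (Ioi ξ) := by
    simpa only [add_comm α 1] using hIα ξ hξ
  obtain ⟨hI₁_nonneg, hI₂_nonneg⟩ := integrals_div_rpow_nonneg α hξ hω_nonneg
  rw [← ENNReal.ofReal_le_ofReal_iff (by positivity), ENNReal.ofReal_mul (by positivity),
    ← lintegral_mul_weight_eq hξ hω_nonneg hI₁ hI₂]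
  exact ofReal_Omega2_Omega1_le hα0 hα1 hω.measurable hξ
end
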